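/- arXiv:math/0703259 — 4 statements merged into one kernel-verified Lean document; each statement's English description precedes it below -/
import Mathlib

section
/- Let d ≥ 2 be an integer and define w : ℝ → ℝ by w(t) = −t^d·(1 + d·t). Then there exist constants t₁ > 0 and A > 0 such that (L_t w)(t) > A·t^(d+1) for all t with 0 < t < t₁. -/
/-!
Writing `S = sinh t` and `C = cosh t`, one has
`t^(2-d) (L_t w)(t) = S² (d(d-1) + d²(d+1) t) - (d-2) S C t (d + d(d+1) t) - d t² - d² t³`.
With `S ~ t` and `S C ~ t` the `t²` terms cancel, since `d(d-1) - d(d-2) - d = 0`, and the `t³`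
coefficient is `d² + 2d`. The error terms are controlled by `t ≤ sinh t` and
`sinh t cosh t (1 - t²) ≤ t`, the latter coming from `tanh t ≤ t`.
-/

open Real Set

lemma sinh_le_mul_cosh {x : ℝ} (hx : 0 ≤ x) : sinh x ≤ x * cosh x := by
  have hderiv (y : ℝ) : HasDerivAt (fun y => y * cosh y - sinh y) (y * sinh y) y := by
    simpa using ((hasDerivAt_id' y).fun_mul (hasDerivAt_cosh y)).fun_sub (hasDerivAt_sinh y)
  have hmono : MonotoneOn (fun y => y * cosh y - sinh y) (Ici 0) := by
    refine monotoneOn_of_hasDerivWithinAt_nonneg (convex_Ici 0) (by fun_prop)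
      (fun y _ => (hderiv y).hasDerivWithinAt) fun y hy => ?_
    rw [interior_Ici, mem_Ioi] at hy
    exact mul_nonneg hy.le (sinh_nonneg_iff.mpr hy.le)
  simpa using hmono self_mem_Ici hx hx

lemma sinh_mul_cosh_mul_one_sub_sq_le {x : ℝ} (hx : 0 ≤ x) :
    sinh x * cosh x * (1 - x ^ 2) ≤ x := by
  have hsc := sinh_le_mul_cosh hx
  have hs : 0 ≤ sinh x := sinh_nonneg_iff.mpr hx
  have hcosh : cosh x ^ 2 * (1 - x ^ 2) ≤ 1 := by
    nlinarith [cosh_sq' x, mul_le_mul hsc hsc hs (by positivity)]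
  rcases le_total 0 (1 - x ^ 2) with h | h
  · calc sinh x * cosh x * (1 - x ^ 2) ≤ x * cosh x * cosh x * (1 - x ^ 2) := by
          gcongr
      _ = x * (cosh x ^ 2 * (1 - x ^ 2)) := by ring
      _ ≤ x := mul_le_of_le_one_right hx hcosh
  · exact (mul_nonpos_of_nonneg_of_nonpos (by positivity) h).trans hx

lemma deriv_neg_pow_mul_one_add (d : ℕ) :
    deriv (fun s : ℝ => -(s ^ d * (1 + d * s))) =
      fun s => -((d : ℝ) * s ^ (d - 1) + d * (d + 1) * s ^ d) := by
  funext s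
  have hfun : (fun s : ℝ => -(s ^ d * (1 + d * s))) = fun s => -(s ^ d + (d : ℝ) * s ^ (d + 1)) := by
    funext s
    ring
  rw [hfun]
  refine (((hasDerivAt_pow d s).fun_add
    ((hasDerivAt_pow (d + 1) s).const_mul (d : ℝ))).fun_neg).deriv.trans ?_
  push_cast
  ring

lemma deriv_deriv_neg_pow_mul_one_add (d : ℕ) :
    deriv (deriv fun s : ℝ => -(s ^ d * (1 + d * s))) =
      fun s => -((d : ℝ) * (d - 1) * s ^ (d - 2) + d ^ 2 * (d + 1) * s ^ (d - 1)) := by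
  funext s
  rw [deriv_neg_pow_mul_one_add]
  refine ((((hasDerivAt_pow (d - 1) s).const_mul (d : ℝ)).fun_add
    ((hasDerivAt_pow d s).const_mul ((d : ℝ) * (d + 1)))).fun_neg).deriv.trans ?_
  rcases d with _ | d
  · simp
  · push_cast
    ring

/-- `s` and `p` stand for `sinh t` and `sinh t * cosh t`; the right-hand side is
`t^(2-d) (L_t w)(t)` with `D = d`. -/
lemma mul_cube_lt_of_sinh_bounds {D t s p : ℝ} (hD : 2 ≤ D) (ht : 0 < t) (hDt : D * t < 1)
    (hts : t ≤ s) (hp : p * (1 - t ^ 2) ≤ t) :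
    D * t ^ 3 < s ^ 2 * (D * (D - 1) + D ^ 2 * (D + 1) * t)
      - (D - 2) * p * t * (D + D * (D + 1) * t) - D * t ^ 2 - D ^ 2 * t ^ 3 := by
  have h1t : 0 < 1 - t ^ 2 := by nlinarith
  have hB : 0 ≤ D * (D - 1) + D ^ 2 * (D + 1) * t := by
    have : 0 ≤ D - 1 := by linarith
    positivity
  have hG : 0 ≤ (D - 2) * t * (D + D * (D + 1) * t) := by
    have : 0 ≤ D - 2 := by linarith
    positivity
  have hs : t ^ 2 * (D * (D - 1) + D ^ 2 * (D + 1) * t)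
      ≤ s ^ 2 * (D * (D - 1) + D ^ 2 * (D + 1) * t) :=
    mul_le_mul_of_nonneg_right (pow_le_pow_left₀ ht.le hts 2) hB
  have hsmall : (D - 2) * t + (D ^ 2 - 1) * t ^ 2 < D + 1 := by nlinarith
  have hpos : 0 < D * t ^ 3 * (D + 1 - (D - 2) * t - (D ^ 2 - 1) * t ^ 2) := by
    have : 0 < D + 1 - (D - 2) * t - (D ^ 2 - 1) * t ^ 2 := by linarith
    positivity
  refine lt_of_mul_lt_mul_left ?_ h1t.le
  nlinarith [mul_le_mul_of_nonneg_left hs h1t.le, mul_le_mul_of_nonneg_left hp hG]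

/-- Supersolution estimate (Lemma `lem:Lt-est`): for `w(t) = −t^d(1+dt)` there are
`t₁, A > 0` with `(L_t w)(t) > A·t^(d+1)` for `0 < t < t₁`, where
`(L_t u)(t) = −sinh²(t)·u''(t) + (d−2)·sinh(t)·cosh(t)·u'(t) + d·u(t)`. -/
theorem stmt_3 (d : ℕ) (hd : 2 ≤ d) :
    ∃ t₁ A : ℝ, 0 < t₁ ∧ 0 < A ∧
      ∀ t : ℝ, 0 < t → t < t₁ →
        A * t ^ (d + 1) <
          -Real.sinh t ^ 2 * deriv (deriv (fun s : ℝ => -(s ^ d * (1 + d * s)))) t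
            + ((d : ℝ) - 2) * Real.sinh t * Real.cosh t *
                deriv (fun s : ℝ => -(s ^ d * (1 + d * s))) t
            + d * (-(t ^ d * (1 + d * t))) := by
  have hD : (2 : ℝ) ≤ d := by exact_mod_cast hd
  refine ⟨1 / d, d, by positivity, by positivity, fun t ht htd => ?_⟩
  have hdt : (d : ℝ) * t < 1 := by rwa [lt_div_iff₀ (by positivity), mul_comm] at htd
  have key := mul_lt_mul_of_pos_left (mul_cube_lt_of_sinh_bounds hD ht hdt
    (self_le_sinh_iff.mpr ht.le) (sinh_mul_cosh_mul_one_sub_sq_le ht.le)) (pow_pos ht (d - 2))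
  rw [deriv_deriv_neg_pow_mul_one_add, deriv_neg_pow_mul_one_add]
  obtain ⟨n, rfl⟩ := Nat.exists_eq_add_of_le' hd
  simp only [Nat.add_sub_cancel] at key ⊢
  push_cast at key ⊢
  linear_combination key
end

section
/- Let d ≥ 2 be an integer and define w : ℝ → ℝ by w(t) = −t^d·(1 + d·t). Then there exist constants C > 0 and δ > 0 such that |(L_t w)(t) − d(d+2)·t^(d+1)| ≤ C·t^(d+2) for all t with 0 < t < δ. -/
/-!
Near `t = 0` we have `sinh t = t + O(t³)` and `sinh t cosh t = t + O(t³)`, so `L_t` differs from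
the Euler operator `E u = -t² u'' + (d - 2) t u' + d u` by terms of size `t⁴ u''` and `t³ u'`.
Since `E (t ^ k) = -(k - d)(k + 1) t ^ k`, `E` kills `t ^ d` and `E w = d(d + 2) t^(d+1)` exactly,
while `w'' = O(t^(d-2))` and `w' = O(t^(d-1))` make the perturbation `O(t^(d+2))`.
-/

open Real Asymptotics Filter Topology

lemma abs_exp_sub_taylor_two_le {x : ℝ} (hx : |x| ≤ 1) :
    |exp x - (1 + x + x ^ 2 / 2)| ≤ |x| ^ 3 := by
  have h := Real.exp_bound hx (n := 3) (by norm_num)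
  norm_num [Finset.sum_range_succ, Nat.factorial] at h
  linarith [pow_nonneg (abs_nonneg x) 3]

lemma sinh_sub_self_isBigO : (fun x => sinh x - x) =O[𝓝 0] (· ^ 3) := by
  refine .of_bound 1 ?_
  filter_upwards [Metric.closedBall_mem_nhds (0 : ℝ) one_pos] with x hx
  rw [Metric.mem_closedBall, dist_zero_right] at hx
  have hpos := abs_exp_sub_taylor_two_le hx
  have hneg := abs_exp_sub_taylor_two_le (x := -x) (by rwa [abs_neg])
  rw [abs_neg] at hneg
  have : sinh x - x =
      ((exp x - (1 + x + x ^ 2 / 2)) - (exp (-x) - (1 + -x + (-x) ^ 2 / 2))) / 2 := by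
    rw [sinh_eq]; ring
  rw [this, Real.norm_eq_abs, Real.norm_eq_abs, abs_pow, abs_div, abs_two, one_mul]
  linarith [abs_sub _ _ |>.trans (add_le_add hpos hneg)]

lemma sinh_sq_sub_sq_isBigO : (fun x => sinh x ^ 2 - x ^ 2) =O[𝓝 0] (· ^ 4) := by
  have hsum : (fun x => sinh x + x) =O[𝓝 0] (· ^ 1) :=
    ((sinh_sub_self_isBigO.trans (isLittleO_pow_pow (by norm_num : 1 < 3)).isBigO).add
      ((isBigO_refl (· ^ 1) (𝓝 (0 : ℝ))).const_mul_left 2)).congr_left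
      fun x => by ring
  exact (sinh_sub_self_isBigO.mul hsum).congr (fun x => by ring) (fun x => by ring)

lemma sinh_mul_cosh_sub_self_isBigO : (fun x => sinh x * cosh x - x) =O[𝓝 0] (· ^ 3) := by
  have h2 : Tendsto (fun x : ℝ => 2 * x) (𝓝 0) (𝓝 0) := by
    simpa using (tendsto_id (x := 𝓝 (0 : ℝ))).const_mul 2
  have hcube : ((· ^ 3) ∘ (2 * ·)) =O[𝓝 (0 : ℝ)] (· ^ 3) :=
    ((isBigO_refl (· ^ 3) (𝓝 (0 : ℝ))).const_mul_left 8).congr_left fun x => by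
      simp only [Function.comp]; ring
  refine (((sinh_sub_self_isBigO.comp_tendsto h2).trans hcube).const_mul_left (1 / 2)).congr_left
    fun x => ?_
  simp only [Function.comp, sinh_two_mul]; ring

/-- The operator `L_t`. -/
noncomputable def hypOp (d : ℕ) (u : ℝ → ℝ) (t : ℝ) : ℝ :=
  -sinh t ^ 2 * deriv (deriv u) t + ((d : ℝ) - 2) * sinh t * cosh t * deriv u t + d * u t

noncomputable def eulerOp (d : ℕ) (u : ℝ → ℝ) (t : ℝ) : ℝ :=
  -t ^ 2 * deriv (deriv u) t + ((d : ℝ) - 2) * t * deriv u t + d * u t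

lemma hypOp_sub_eulerOp (d : ℕ) (u : ℝ → ℝ) (t : ℝ) :
    hypOp d u t - eulerOp d u t = -(sinh t ^ 2 - t ^ 2) * deriv (deriv u) t
      + ((d : ℝ) - 2) * (sinh t * cosh t - t) * deriv u t := by
  unfold hypOp eulerOp; ring

lemma hypOp_sub_eulerOp_isBigO (d : ℕ) {u : ℝ → ℝ} {m : ℕ}
    (h₂ : deriv (deriv u) =O[𝓝 0] (· ^ m)) (h₁ : deriv u =O[𝓝 0] (· ^ (m + 1))) :
    (fun t => hypOp d u t - eulerOp d u t) =O[𝓝 0] (· ^ (m + 4)) := by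
  have hsq : (fun t => -((sinh t ^ 2 - t ^ 2) * deriv (deriv u) t)) =O[𝓝 0] (· ^ (m + 4)) :=
    ((sinh_sq_sub_sq_isBigO.mul h₂).neg_left).congr_right fun t => by ring
  have hsc : (fun t => ((d : ℝ) - 2) * ((sinh t * cosh t - t) * deriv u t)) =O[𝓝 0]
      (· ^ (m + 4)) :=
    ((sinh_mul_cosh_sub_self_isBigO.mul h₁).const_mul_left ((d : ℝ) - 2)).congr_right
      fun t => by ring
  refine (hsq.add hsc).congr_left fun t => ?_
  rw [hypOp_sub_eulerOp]
  ring

lemma const_mul_pow_add_const_mul_pow_isBigO (a b : ℝ) {m n : ℕ} (hmn : m < n) :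
    (fun t => a * t ^ m + b * t ^ n) =O[𝓝 0] (· ^ m) :=
  ((isBigO_refl _ _).const_mul_left a).add ((isLittleO_pow_pow hmn).isBigO.const_mul_left b)

noncomputable def w (d : ℕ) (t : ℝ) : ℝ := -(t ^ d * (1 + d * t))

lemma deriv_w (d : ℕ) :
    deriv (w d) = fun t : ℝ => -(d * t ^ (d - 1) + d * (d + 1) * t ^ d) := by
  funext t
  refine (((hasDerivAt_pow d t).mul ((hasDerivAt_id t).const_mul (d : ℝ) |>.const_add 1)).neg
    |>.congr_deriv ?_).deriv
  cases d with
  | zero => simp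
  | succ e => simp only [id, Nat.add_sub_cancel]; push_cast; ring

lemma deriv_deriv_w (d : ℕ) (hd : 1 ≤ d) :
    deriv (deriv (w d)) =
      fun t : ℝ => -(d * ((d : ℝ) - 1) * t ^ (d - 2) + d ^ 2 * (d + 1) * t ^ (d - 1)) := by
  rw [deriv_w]
  funext t
  refine ((((hasDerivAt_pow (d - 1) t).const_mul (d : ℝ)).add
    ((hasDerivAt_pow d t).const_mul ((d : ℝ) * (d + 1)))).neg |>.congr_deriv ?_).deriv
  rw [Nat.cast_sub hd, Nat.sub_sub]
  ring

lemma eulerOp_w (d : ℕ) (hd : 2 ≤ d) (t : ℝ) :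
    eulerOp d (w d) t = d * (d + 2) * t ^ (d + 1) := by
  obtain ⟨e, rfl⟩ := Nat.exists_eq_add_of_le' hd
  rw [eulerOp, deriv_deriv_w _ (by omega), deriv_w, w]
  simp only [Nat.add_sub_cancel, Nat.add_succ_sub_one]
  push_cast
  ring

lemma deriv_deriv_w_isBigO (d : ℕ) (hd : 2 ≤ d) :
    deriv (deriv (w d)) =O[𝓝 0] (· ^ (d - 2)) := by
  rw [deriv_deriv_w d (by omega)]
  exact (const_mul_pow_add_const_mul_pow_isBigO _ _ (by omega)).neg_left

lemma deriv_w_isBigO (d : ℕ) (hd : 2 ≤ d) : deriv (w d) =O[𝓝 0] (· ^ (d - 2 + 1)) := by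
  rw [deriv_w, show d - 2 + 1 = d - 1 by omega]
  exact (const_mul_pow_add_const_mul_pow_isBigO _ _ (by omega)).neg_left

lemma exists_bound_of_isBigO_pow {f : ℝ → ℝ} {n : ℕ} (h : f =O[𝓝 0] (· ^ n)) :
    ∃ C δ : ℝ, 0 < C ∧ 0 < δ ∧ ∀ t : ℝ, 0 < t → t < δ → |f t| ≤ C * t ^ n := by
  obtain ⟨C, hC, hCf⟩ := h.exists_pos
  obtain ⟨δ, hδ, hδf⟩ := Metric.eventually_nhds_iff.1 hCf.bound
  refine ⟨C, δ, hC, hδ, fun t ht htδ => ?_⟩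
  have := hδf (by rwa [Real.dist_0_eq_abs, abs_of_pos ht])
  rwa [Real.norm_eq_abs, Real.norm_eq_abs, abs_of_pos (pow_pos ht n)] at this

/-- Expansion `L_t(w) = d(d+2)t^(d+1) + O(t^(d+2))` for `w(t) = −t^d(1+dt)`, where
`(L_t u)(t) = −sinh²(t)·u''(t) + (d−2)·sinh(t)·cosh(t)·u'(t) + d·u(t)`. -/
theorem stmt_4 (d : ℕ) (hd : 2 ≤ d) :
    ∃ C δ : ℝ, 0 < C ∧ 0 < δ ∧
      ∀ t : ℝ, 0 < t → t < δ →
        |(-Real.sinh t ^ 2 * deriv (deriv (fun s : ℝ => -(s ^ d * (1 + d * s)))) t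
            + ((d : ℝ) - 2) * Real.sinh t * Real.cosh t *
                deriv (fun s : ℝ => -(s ^ d * (1 + d * s))) t
            + d * (-(t ^ d * (1 + d * t))))
          - d * (d + 2) * t ^ (d + 1)| ≤ C * t ^ (d + 2) := by
  have h := hypOp_sub_eulerOp_isBigO d (deriv_deriv_w_isBigO d hd) (deriv_w_isBigO d hd)
  simp only [eulerOp_w d hd, show d - 2 + 4 = d + 2 by omega] at h
  exact exists_bound_of_isBigO_pow h
end

section
/- Let R₁ > 0 and λ ≥ 1 be real numbers. Let η₁, η₂ : ℝ → ℝ be continuously differentiable functions with η₁'(r) ≤ η₂'(r) for all r ∈ [R₁, 6λR₁]. Let γ : ℝ → ℝ be a continuous nonnegative function vanishing outside [R₁, 6λR₁] with ∫_{R₁}^{6λR₁} γ(t) dt > 0 and ∫_{R₁}^{6λR₁} γ(t)·(η₁(t) − η₂(t)) dt = 0. Define m = −1 / (∫_{R₁}^{6λR₁} γ(t) dt), β(r) = 1 + m·∫_{R₁}^{r} γ(t) dt, and η(r) = η₁(R₁) + ∫_{R₁}^{r} [β(t)·η₁'(t) + (1 − β(t))·η₂'(t)] dt. Then: η(r) =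 η₁(r) for all r ≤ R₁; η(r) = η₂(r) for all r ≥ 6λR₁; and η'(r) ≤ η₂'(r) for all r ≥ R₁. -/
/-!
The cut-off `β = 1 - ∫_{R₁}^r γ / ∫_{R₁}^{6λR₁} γ` equals `1` left of `R₁`, `0` right of `6λR₁`,
and is nonnegative in between. Writing `h = η₁ - η₂`, the integrand of `η` is `η₂' + β h'`, and
integrating by parts with `β(R₁) = 1` gives the closed form `η = η₂ + β h - ∫_{R₁}^r β' h`, where
`β' = m γ`. Left of `R₁` both `γ` and `1 - β` vanish, so `η = η₂ + h = η₁`; right of `6λR₁`,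
`β = 0` and `∫_{R₁}^r γ h = ∫_{R₁}^{6λR₁} γ h = 0`, so `η = η₂`. Finally
`η' - η₂' = β (η₁' - η₂')` is `≤ 0` for `r ≥ R₁`.
-/

open MeasureTheory Set intervalIntegral

namespace intervalIntegral

variable {φ : ℝ → ℝ} {a b r : ℝ}

theorem integral_eq_zero_of_eqOn_Ioo (hab : a ≤ b) (hφ : EqOn φ 0 (Ioo a b)) :
    ∫ t in a..b, φ t = 0 := by
  rw [integral_of_le hab, integral_Ioc_eq_integral_Ioo]
  exact setIntegral_eq_zero_of_forall_eq_zero hφ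

theorem integral_eq_zero_of_le_of_support_subset_Icc (hφ : ∀ t, t ∉ Icc a b → φ t = 0)
    (hr : r ≤ a) : ∫ t in a..r, φ t = 0 := by
  rw [integral_symm, integral_eq_zero_of_eqOn_Ioo hr fun t ht => hφ t fun h => ht.2.not_ge h.1,
    neg_zero]

theorem integral_eq_of_le_of_support_subset_Icc (hφc : Continuous φ)
    (hφ : ∀ t, t ∉ Icc a b → φ t = 0) (hr : b ≤ r) :
    ∫ t in a..r, φ t = ∫ t in a..b, φ t := by
  rw [← integral_add_adjacent_intervals (hφc.intervalIntegrable a b) (hφc.intervalIntegrable b r),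
    integral_eq_zero_of_eqOn_Ioo hr fun t ht => hφ t fun h => ht.1.not_ge h.2, add_zero]

end intervalIntegral

theorem add_integral_interpolated_deriv_eq {a r : ℝ} {f₁ f₂ β β' : ℝ → ℝ} (hf₁ : ContDiff ℝ 1 f₁)
    (hf₂ : ContDiff ℝ 1 f₂) (hβ : ∀ t, HasDerivAt β (β' t) t) (hβ' : Continuous β')
    (hβa : β a = 1) :
    f₁ a + ∫ t in a..r, (β t * deriv f₁ t + (1 - β t) * deriv f₂ t) =
      f₂ r + β r * (f₁ r - f₂ r) - ∫ t in a..r, β' t * (f₁ t - f₂ t) := by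
  have hd₁ := hf₁.differentiable one_ne_zero
  have hd₂ := hf₂.differentiable one_ne_zero
  have hc₁ := hf₁.continuous_deriv le_rfl
  have hc₂ := hf₂.continuous_deriv le_rfl
  have hβc : Continuous β := continuous_iff_continuousAt.2 fun t => (hβ t).continuousAt
  have parts := integral_mul_deriv_eq_deriv_mul (a := a) (b := r) (v := fun t => f₁ t - f₂ t)
    (fun t _ => hβ t)
    (fun t _ => (hd₁ t).hasDerivAt.sub (hd₂ t).hasDerivAt) (hβ'.intervalIntegrable _ _)
    ((hc₁.sub hc₂).intervalIntegrable _ _)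
  have ftc := integral_deriv_eq_sub (fun t _ => hd₂ t) (hc₂.intervalIntegrable a r)
  calc f₁ a + ∫ t in a..r, (β t * deriv f₁ t + (1 - β t) * deriv f₂ t)
      = f₁ a + ((∫ t in a..r, deriv f₂ t) + ∫ t in a..r, β t * (deriv f₁ t - deriv f₂ t)) := by
        rw [← integral_add (g := fun t => β t * (deriv f₁ t - deriv f₂ t))
          (hc₂.intervalIntegrable _ _)
          ((hβc.mul (hc₁.sub hc₂)).intervalIntegrable _ _)]
        congr 1
        exact integral_congr fun t _ => by ring
    _ = _ := by rw [parts, ftc, hβa]; ring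

variable {γ : ℝ → ℝ} {a b r : ℝ}

noncomputable def cutoff (γ : ℝ → ℝ) (a b r : ℝ) : ℝ :=
  1 - (∫ t in a..r, γ t) / ∫ t in a..b, γ t

theorem hasDerivAt_cutoff (hγc : Continuous γ) :
    HasDerivAt (cutoff γ a b) (-(∫ t in a..b, γ t)⁻¹ * γ r) r :=
  (((hγc.integral_hasStrictDerivAt a r).hasDerivAt.div_const _).const_sub 1).congr_deriv
    (by ring)

theorem cutoff_of_le (hγ : ∀ t, t ∉ Icc a b → γ t = 0) (hr : r ≤ a) : cutoff γ a b r = 1 := by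
  simp [cutoff, integral_eq_zero_of_le_of_support_subset_Icc hγ hr]

theorem cutoff_of_ge (hγc : Continuous γ) (hγ : ∀ t, t ∉ Icc a b → γ t = 0)
    (hI : ∫ t in a..b, γ t ≠ 0) (hr : b ≤ r) : cutoff γ a b r = 0 := by
  simp [cutoff, integral_eq_of_le_of_support_subset_Icc hγc hγ hr, hI]

theorem cutoff_nonneg (hγc : Continuous γ) (hγ0 : ∀ t, 0 ≤ γ t) (hI : 0 < ∫ t in a..b, γ t)
    (har : a ≤ r) (hrb : r ≤ b) : 0 ≤ cutoff γ a b r :=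
  sub_nonneg.2 <| (div_le_one hI).2 <|
    integral_mono_interval le_rfl har hrb (ae_of_all _ hγ0) (hγc.intervalIntegrable _ _)

theorem stmt_6_general (R₁ lam : ℝ)
    (η₁ η₂ : ℝ → ℝ) (hη₁ : ContDiff ℝ 1 η₁) (hη₂ : ContDiff ℝ 1 η₂)
    (hder : ∀ r ∈ Set.Icc R₁ (6 * lam * R₁), deriv η₁ r ≤ deriv η₂ r)
    (γ : ℝ → ℝ) (hγc : Continuous γ) (hγ0 : ∀ r, 0 ≤ γ r)
    (hγsupp : ∀ r, r ∉ Set.Icc R₁ (6 * lam * R₁) → γ r = 0)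
    (hγint : 0 < ∫ t in R₁..(6 * lam * R₁), γ t)
    (hγorth : (∫ t in R₁..(6 * lam * R₁), γ t * (η₁ t - η₂ t)) = 0)
    (m : ℝ) (hm : m = -1 / ∫ t in R₁..(6 * lam * R₁), γ t)
    (β : ℝ → ℝ) (hβ : ∀ r, β r = 1 + m * ∫ t in R₁..r, γ t)
    (η : ℝ → ℝ)
    (hη : ∀ r, η r = η₁ R₁ + ∫ t in R₁..r, (β t * deriv η₁ t + (1 - β t) * deriv η₂ t)) :
    (∀ r ≤ R₁, η r = η₁ r) ∧ (∀ r, 6 * lam * R₁ ≤ r → η r = η₂ r) ∧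
      ∀ r, R₁ ≤ r → deriv η r ≤ deriv η₂ r := by
  set R₂ := 6 * lam * R₁
  obtain rfl : β = cutoff γ R₁ R₂ := funext fun r => by rw [hβ, hm, cutoff]; ring
  set c := -(∫ t in R₁..R₂, γ t)⁻¹
  set φ := fun t => c * γ t * (η₁ t - η₂ t)
  have hφc : Continuous φ := by fun_prop
  have hφsupp : ∀ t, t ∉ Icc R₁ R₂ → φ t = 0 := fun t ht => by simp [φ, hγsupp t ht]
  have hφint : ∫ t in R₁..R₂, φ t = 0 := by
    simp only [φ, mul_assoc]
    rw [intervalIntegral.integral_const_mul, hγorth, mul_zero]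
  have hηφ : ∀ r, η r = η₂ r + cutoff γ R₁ R₂ r * (η₁ r - η₂ r) - ∫ t in R₁..r, φ t := fun r =>
    (hη r).trans <| add_integral_interpolated_deriv_eq hη₁ hη₂ (fun _ => hasDerivAt_cutoff hγc)
      (by fun_prop) (cutoff_of_le hγsupp le_rfl)
  refine ⟨fun r hr => ?_, fun r hr => ?_, fun r hr => ?_⟩
  · rw [hηφ, cutoff_of_le hγsupp hr, integral_eq_zero_of_le_of_support_subset_Icc hφsupp hr]
    ring
  · rw [hηφ, cutoff_of_ge hγc hγsupp hγint.ne' hr,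
      integral_eq_of_le_of_support_subset_Icc hφc hφsupp hr, hφint]
    ring
  · have hβc : Continuous (cutoff γ R₁ R₂) :=
      continuous_iff_continuousAt.2 fun t => (hasDerivAt_cutoff hγc).continuousAt
    have hc₁ := hη₁.continuous_deriv le_rfl
    have hc₂ := hη₂.continuous_deriv le_rfl
    rw [show η = _ from funext hη, deriv_const_add, Continuous.deriv_integral _ (by fun_prop),
      ← sub_nonpos]
    rcases le_or_gt r R₂ with hr₂ | hr₂
    · nlinarith [cutoff_nonneg hγc hγ0 hγint hr hr₂, hder r ⟨hr, hr₂⟩]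
    · simp [cutoff_of_ge hγc hγsupp hγint.ne' hr₂.le]

/-- Properties of the interpolating function `η` that rounds the corner between
`η₁` and `η₂`: `η = η₁` for `r ≤ R₁`, `η = η₂` for `r ≥ 6λR₁`, and `η' ≤ η₂'`
for `r ≥ R₁`. -/
theorem stmt_6 (R₁ lam : ℝ) (hR₁ : 0 < R₁) (hlam : 1 ≤ lam)
    (η₁ η₂ : ℝ → ℝ) (hη₁ : ContDiff ℝ 1 η₁) (hη₂ : ContDiff ℝ 1 η₂)
    (hder : ∀ r ∈ Set.Icc R₁ (6 * lam * R₁), deriv η₁ r ≤ deriv η₂ r)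
    (γ : ℝ → ℝ) (hγc : Continuous γ) (hγ0 : ∀ r, 0 ≤ γ r)
    (hγsupp : ∀ r, r ∉ Set.Icc R₁ (6 * lam * R₁) → γ r = 0)
    (hγint : 0 < ∫ t in R₁..(6 * lam * R₁), γ t)
    (hγorth : (∫ t in R₁..(6 * lam * R₁), γ t * (η₁ t - η₂ t)) = 0)
    (m : ℝ) (hm : m = -1 / ∫ t in R₁..(6 * lam * R₁), γ t)
    (β : ℝ → ℝ) (hβ : ∀ r, β r = 1 + m * ∫ t in R₁..r, γ t)
    (η : ℝ → ℝ)
    (hη : ∀ r, η r = η₁ R₁ + ∫ t in R₁..r, (β t * deriv η₁ t + (1 - β t) * deriv η₂ t)) :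
    (∀ r ≤ R₁, η r = η₁ r) ∧ (∀ r, 6 * lam * R₁ ≤ r → η r = η₂ r) ∧
      ∀ r, R₁ ≤ r → deriv η r ≤ deriv η₂ r :=
  stmt_6_general R₁ lam η₁ η₂ hη₁ hη₂ hder γ hγc hγ0 hγsupp hγint hγorth m hm β hβ η hη
end

section
/- Let n ≥ 2 be an integer, let μ̲, μ̄ be reals with 0 < μ̲ ≤ μ̄, set λ = (μ̄/μ̲)^(1/(n+1)), and let C > 0. Then there exists R₁ > 0 such that the following holds: for every a ∈ (0,1) satisfying ((n+1)/n)·√(4/3)·μ̄/(4λR₁)^(n+1) < 1/a − 1 < ((n+1)/n)·√(3/4)·μ̲/(3λR₁)^(n+1), every constant m ∈ [μ̲, μ̄], and every continuously differentiable function A₁ : [R₁, 7λR₁] → ℝ with 0 ≤ A₁(r) ≤ C and −C/(n·r²) ≤ (d/dr)(A₁(r)/r) ≤ 0 for all r ∈ [R₁, 7λR₁], the functions η₁(r) = r^(n+1) + ((n+1)/n)·m − A₁(r)/r and η₂(r) = r^(n+1)/a satisfy: (i) η₁'(r) < η₂'(r) for all r ∈ [R₁, 7λR₁]; (ii) η₁(r)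 − η₂(r) > μ̲/20 for all r ∈ [R₁, 3λR₁]; (iii) η₂(r) − η₁(r) > μ̄/10 for all r ∈ [4λR₁, 7λR₁]. -/
/-!
Write `b = 1/a - 1 > 0` and `K = (n+1)/n ≥ 1`, so that `η₁ - η₂ = K m - A₁(r)/r - b r^(n+1)`.
The two-sided bound on `b` pins `b r^(n+1)` below `K √(3/4) μ̲ < (7/8) K μ̲` on `[R₁, 3λR₁]` and
above `K √(4/3) μ̄ > (8/7) K μ̄` on `[4λR₁, 7λR₁]`, which leaves the gaps (ii) and (iii) once
`A₁(r)/r ≤ C/R₁ ≤ μ̲/40`. For (i), `η₂' - η₁' = (n+1) b r^n + (A₁/r)'`, and the lower bound on `b`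
gives `b R₁^(n+2) > C ≥ -n r² (A₁/r)'` as soon as `R₁ ≥ C (4λ)^(n+1)/μ̄`.
-/

open Real Set

lemma sqrt_three_div_four_lt : √(3 / 4 : ℝ) < 7 / 8 := by
  rw [Real.sqrt_lt' (by norm_num)]; norm_num

lemma lt_sqrt_four_div_three : (8 / 7 : ℝ) < √(4 / 3) := by
  rw [Real.lt_sqrt (by norm_num)]; norm_num

lemma one_le_natCast_add_one_div {n : ℕ} (hn : 1 ≤ n) : 1 ≤ ((n : ℝ) + 1) / n := by
  have hn' : (0 : ℝ) < n := by exact_mod_cast hn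
  rw [le_div_iff₀ hn']; linarith

lemma mul_pow_lt_of_lt_div_pow {b c r R : ℝ} {k : ℕ} (hb : 0 ≤ b) (hr : 0 ≤ r) (hrR : r ≤ R)
    (hR : 0 < R) (h : b < c / R ^ k) : b * r ^ k < c :=
  calc b * r ^ k ≤ b * R ^ k := by gcongr
    _ < c := (lt_div_iff₀ (pow_pos hR k)).1 h

lemma lt_mul_pow_of_div_pow_lt {b c r R : ℝ} {k : ℕ} (hb : 0 ≤ b) (hR : 0 < R) (hRr : R ≤ r)
    (h : c / R ^ k < b) : c < b * r ^ k :=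
  calc c < b * R ^ k := (div_lt_iff₀ (pow_pos hR k)).1 h
    _ ≤ b * r ^ k := by gcongr

lemma lt_mul_pow_succ_of_lt_mul_pow {b C μ q R : ℝ} {k : ℕ} (hq : 0 < q) (hR : 0 < R)
    (hCR : C * q ^ k ≤ R * μ) (h : μ < b * (q * R) ^ k) : C < b * R ^ (k + 1) := by
  refine lt_of_mul_lt_mul_right ?_ (pow_nonneg hq.le k)
  calc C * q ^ k ≤ R * μ := hCR
    _ < R * (b * (q * R) ^ k) := mul_lt_mul_of_pos_left h hR
    _ = b * R ^ (k + 1) * q ^ k := by ring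

lemma div_natCast_mul_sq_lt {n : ℕ} {b C r : ℝ} (hn : 1 ≤ n) (hr : 0 < r) (hb : 0 ≤ b)
    (h : C < b * r ^ (n + 2)) : C / (n * r ^ 2) < b * ((n + 1) * r ^ n) := by
  have hn' : (1 : ℝ) ≤ n := by exact_mod_cast hn
  rw [div_lt_iff₀ (by positivity)]
  calc C < b * r ^ (n + 2) := h
    _ ≤ (n * (n + 1)) * (b * r ^ (n + 2)) :=
        le_mul_of_one_le_left (by positivity) (by nlinarith)
    _ = b * ((n + 1) * r ^ n) * (n * r ^ 2) := by ring

lemma deriv_pow_add_sub_lt_deriv_pow_div {n : ℕ} {a c r : ℝ} {g : ℝ → ℝ}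
    (hg : DifferentiableAt ℝ g r) (h : -deriv g r < (1 / a - 1) * ((n + 1) * r ^ n)) :
    deriv (fun s : ℝ => s ^ (n + 1) + c - g s) r < deriv (fun s : ℝ => s ^ (n + 1) / a) r := by
  have h₁ : deriv (fun s : ℝ => s ^ (n + 1) + c - g s) r = (n + 1) * r ^ n - deriv g r := by
    simpa using (((hasDerivAt_pow (n + 1) r).add_const c).fun_sub hg.hasDerivAt).deriv
  have h₂ : deriv (fun s : ℝ => s ^ (n + 1) / a) r = (n + 1) * r ^ n / a := by simp
  rw [h₁, h₂]
  linarith [show (n + 1) * r ^ n / a = (n + 1) * r ^ n + (1 / a - 1) * ((n + 1) * r ^ n) by ring]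

lemma deriv_pow_add_sub_div_self_lt_deriv_pow_div {n : ℕ} {a c C r : ℝ} {A : ℝ → ℝ}
    (hn : 1 ≤ n) (hr : 0 < r) (hb : 0 ≤ 1 / a - 1) (hA : DifferentiableAt ℝ A r)
    (hdA : -C / (n * r ^ 2) ≤ deriv (fun s => A s / s) r) (hC : C < (1 / a - 1) * r ^ (n + 2)) :
    deriv (fun s : ℝ => s ^ (n + 1) + c - A s / s) r < deriv (fun s : ℝ => s ^ (n + 1) / a) r :=
  deriv_pow_add_sub_lt_deriv_pow_div (hA.div differentiableAt_id hr.ne') <| by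
    have := div_natCast_mul_sq_lt hn hr hb hC
    linarith [neg_div ((n : ℝ) * r ^ 2) C]

lemma lt_pow_add_sub_sub_pow_div {K μ m x t a : ℝ} (hK : 1 ≤ K) (hμ : 0 < μ) (hm : μ ≤ m)
    (hx : x ≤ μ / 40) (ht : (1 / a - 1) * t < K * √(3 / 4) * μ) :
    μ / 20 < (t + K * m - x) - t / a := by
  have hs : K * √(3 / 4) * μ ≤ K * (7 / 8) * μ := by
    gcongr; exact sqrt_three_div_four_lt.le
  have hKm : K * μ ≤ K * m := by gcongr
  have hKμ : μ ≤ K * μ := le_mul_of_one_le_left hμ.le hK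
  linarith [show t / a = t + (1 / a - 1) * t by ring]

lemma lt_pow_div_sub_pow_add_sub {K μ m x t a : ℝ} (hK : 1 ≤ K) (hμ : 0 < μ) (hm : m ≤ μ)
    (hx : 0 ≤ x) (ht : K * √(4 / 3) * μ < (1 / a - 1) * t) :
    μ / 10 < t / a - (t + K * m - x) := by
  have hs : K * (8 / 7) * μ ≤ K * √(4 / 3) * μ := by
    gcongr; exact lt_sqrt_four_div_three.le
  have hKm : K * m ≤ K * μ := by gcongr
  have hKμ : μ ≤ K * μ := le_mul_of_one_le_left hμ.le hK
  linarith [show t / a = t + (1 / a - 1) * t by ring]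

/-- Lemma `lem:eta12est`: for `R₁` sufficiently large, with
`η₁(r) = r^(n+1) + ((n+1)/n)·m − A₁(r)/r` and `η₂(r) = r^(n+1)/a`, one has
`η₁' < η₂'` on `[R₁, 7λR₁]`, `η₁ − η₂ > μlo/20` on `[R₁, 3λR₁]`, and
`η₂ − η₁ > μhi/10` on `[4λR₁, 7λR₁]`. -/
theorem stmt_7 (n : ℕ) (hn : 2 ≤ n) (μlo μhi : ℝ) (hμlo : 0 < μlo) (hle : μlo ≤ μhi)
    (lam : ℝ) (hlam : lam = (μhi / μlo) ^ ((1 : ℝ) / (n + 1)))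
    (C : ℝ) (hC : 0 < C) :
    ∃ R₁ : ℝ, 0 < R₁ ∧
      ∀ a : ℝ, 0 < a → a < 1 →
        ((n + 1 : ℝ) / n) * Real.sqrt (4 / 3) * μhi / (4 * lam * R₁) ^ (n + 1) < 1 / a - 1 →
        1 / a - 1 < ((n + 1 : ℝ) / n) * Real.sqrt (3 / 4) * μlo / (3 * lam * R₁) ^ (n + 1) →
        ∀ m : ℝ, μlo ≤ m → m ≤ μhi →
        ∀ A₁ : ℝ → ℝ,
          (∀ r ∈ Set.Icc R₁ (7 * lam * R₁), DifferentiableAt ℝ A₁ r) →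
          (∀ r ∈ Set.Icc R₁ (7 * lam * R₁), 0 ≤ A₁ r ∧ A₁ r ≤ C) →
          (∀ r ∈ Set.Icc R₁ (7 * lam * R₁),
            -C / (n * r ^ 2) ≤ deriv (fun s => A₁ s / s) r ∧
              deriv (fun s => A₁ s / s) r ≤ 0) →
          (∀ r ∈ Set.Icc R₁ (7 * lam * R₁),
            deriv (fun s : ℝ => s ^ (n + 1) + ((n + 1 : ℝ) / n) * m - A₁ s / s) r <
              deriv (fun s : ℝ => s ^ (n + 1) / a) r) ∧
          (∀ r ∈ Set.Icc R₁ (3 * lam * R₁),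
            μlo / 20 < (r ^ (n + 1) + ((n + 1 : ℝ) / n) * m - A₁ r / r) - r ^ (n + 1) / a) ∧
          (∀ r ∈ Set.Icc (4 * lam * R₁) (7 * lam * R₁),
            μhi / 10 < r ^ (n + 1) / a - (r ^ (n + 1) + ((n + 1 : ℝ) / n) * m - A₁ r / r)) := by
  have hμhi : 0 < μhi := hμlo.trans_le hle
  have hn₁ : 1 ≤ n := by omega
  have hK := one_le_natCast_add_one_div hn₁
  have hlam₁ : 1 ≤ lam := hlam ▸ Real.one_le_rpow ((one_le_div hμlo).2 hle) (by positivity)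
  set R₁ := max (40 * C / μlo) (C * (4 * lam) ^ (n + 1) / μhi)
  have hR₁ : 0 < R₁ := lt_max_of_lt_left (by positivity)
  have hR₁_lo : 40 * C / μlo ≤ R₁ := le_max_left _ _
  have hR₁_hi : C * (4 * lam) ^ (n + 1) / μhi ≤ R₁ := le_max_right _ _
  have hCR₁ : C / R₁ ≤ μlo / 40 := by
    have := (div_le_iff₀ hμlo).1 hR₁_lo
    rw [div_le_div_iff₀ hR₁ (by norm_num)]; linarith
  refine ⟨R₁, hR₁, fun a ha ha1 hlo hhi m hm₁ hm₂ A₁ hdiff hA hdA => ?_⟩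
  have hb : 0 < 1 / a - 1 := sub_pos.2 (one_lt_one_div ha ha1)
  have hA_div : ∀ r ∈ Icc R₁ (7 * lam * R₁), 0 ≤ A₁ r / r ∧ A₁ r / r ≤ μlo / 40 := fun r hr =>
    ⟨div_nonneg (hA r hr).1 (hR₁.le.trans hr.1),
      (div_le_div₀ hC.le (hA r hr).2 hR₁ hr.1).trans hCR₁⟩
  have hbR₁ : C < (1 / a - 1) * R₁ ^ (n + 1 + 1) := by
    refine lt_mul_pow_succ_of_lt_mul_pow (q := 4 * lam) (by positivity) hR₁
      ((div_le_iff₀ hμhi).1 hR₁_hi) ?_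
    have hs := lt_sqrt_four_div_three
    have : μhi ≤ (n + 1 : ℝ) / n * √(4 / 3) * μhi := le_mul_of_one_le_left hμhi.le (by nlinarith)
    exact this.trans_lt ((div_lt_iff₀ (by positivity)).1 hlo)
  refine ⟨fun r hr => ?_, fun r hr => ?_, fun r hr => ?_⟩
  · exact deriv_pow_add_sub_div_self_lt_deriv_pow_div hn₁ (hR₁.trans_le hr.1) hb.le (hdiff r hr)
      (hdA r hr).1 (hbR₁.trans_le (by gcongr; exact hr.1))
  · have hr₀ : 0 < r := hR₁.trans_le hr.1
    have hr₇ : r ∈ Icc R₁ (7 * lam * R₁) := ⟨hr.1, hr.2.trans (by nlinarith)⟩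
    exact lt_pow_add_sub_sub_pow_div hK hμlo hm₁ (hA_div r hr₇).2
      (mul_pow_lt_of_lt_div_pow hb.le hr₀.le hr.2 (by positivity) hhi)
  · have hr₇ : r ∈ Icc R₁ (7 * lam * R₁) := ⟨le_trans (by nlinarith) hr.1, hr.2⟩
    exact lt_pow_div_sub_pow_add_sub hK hμhi hm₂ (hA_div r hr₇).1
      (lt_mul_pow_of_div_pow_lt hb.le (by positivity) hr.1 hlo)
end
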